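/- For f : X → GL_n(ℂ) smooth, setting {f} := trace((f^{-1} df)^{∧3}), one has 3·d(f|g) = {f} + {g} - {fg}, and {f^{-1}} = -{f}. -/

import Mathlib

/-!
Write `α = f⁻¹ df` and `β = dg g⁻¹`. The logarithmic derivative of `fg` is `g⁻¹ (α + β) g`, and
that of `f⁻¹` is `-df f⁻¹ = -f α f⁻¹`. Since `{f}(u, v, w) = 3 tr(α_u [α_v, α_w])` is invariant
under conjugation and odd in `α`, this gives `{f⁻¹} = -{f}` and expresses `{fg}` through `α + β`.
On the other side `(f|g) = tr(α ∧ β)`, and the Maurer–Cartan equations `dα = -α ∧ α`,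
`dβ = β ∧ β` (the second derivatives of `f` and `g` drop out by symmetry) identify `3 d(f|g)` with
minus the terms of `{fg}` that mix `α` and `β`, that is with `{f} + {g} - {fg}`.
-/

attribute [local instance] Matrix.normedAddCommGroup Matrix.normedSpace

/-- For maps `f, g : X → GL_n(ℂ)`, the scalar 2-form `(f|g) = trace(f⁻¹ df ∧ dg g⁻¹)`,
evaluated at a point `x` on a pair of tangent vectors `(v, w)`. -/
noncomputable def pairForm {E : Type*} [NormedAddCommGroup E] [NormedSpace ℂ E] {n : ℕ}
    (f g : E → Matrix (Fin n) (Fin n) ℂ) (x v w : E) : ℂ :=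
  ((f x)⁻¹ * fderiv ℂ f x v * fderiv ℂ g x w * (g x)⁻¹).trace
    - ((f x)⁻¹ * fderiv ℂ f x w * fderiv ℂ g x v * (g x)⁻¹).trace

/-- The exterior derivative of the 2-form `(f|g)`, evaluated at `x` on `(u, v, w)`
(for constant vector fields on the vector space `E`). -/
noncomputable def dPairForm {E : Type*} [NormedAddCommGroup E] [NormedSpace ℂ E] {n : ℕ}
    (f g : E → Matrix (Fin n) (Fin n) ℂ) (x u v w : E) : ℂ :=
  fderiv ℂ (fun y => pairForm f g y v w) x u
    - fderiv ℂ (fun y => pairForm f g y u w) x v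
    + fderiv ℂ (fun y => pairForm f g y u v) x w

/-- The 3-form `{f} = trace((f⁻¹ df)^∧3)`, evaluated at `x` on `(u, v, w)`. -/
noncomputable def threeForm {E : Type*} [NormedAddCommGroup E] [NormedSpace ℂ E] {n : ℕ}
    (f : E → Matrix (Fin n) (Fin n) ℂ) (x u v w : E) : ℂ :=
  ∑ σ : Equiv.Perm (Fin 3),
    ((Equiv.Perm.sign σ : ℤ) : ℂ) *
      ((f x)⁻¹ * fderiv ℂ f x (![u, v, w] (σ 0)) *
        ((f x)⁻¹ * fderiv ℂ f x (![u, v, w] (σ 1))) *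
        ((f x)⁻¹ * fderiv ℂ f x (![u, v, w] (σ 2)))).trace

section SecondDerivative

variable {𝕜 : Type*} [NontriviallyNormedField 𝕜] {E F : Type*} [NormedAddCommGroup E]
  [NormedSpace 𝕜 E] [NormedAddCommGroup F] [NormedSpace 𝕜 F] {f : E → F} {x : E}

theorem differentiableAt_fderiv_apply (hf : ContDiffAt 𝕜 2 f x) (a : E) :
    DifferentiableAt 𝕜 (fun y => fderiv 𝕜 f y a) x :=
  ((hf.fderiv_right (m := 1) one_add_one_eq_two.le).differentiableAt one_ne_zero).clm_apply
    (differentiableAt_const a)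

theorem fderiv_fderiv_apply_comm [IsRCLikeNormedField 𝕜] (hf : ContDiffAt 𝕜 2 f x) (a c : E) :
    fderiv 𝕜 (fun y => fderiv 𝕜 f y a) x c = fderiv 𝕜 (fun y => fderiv 𝕜 f y c) x a := by
  have hd := (hf.fderiv_right (m := 1) one_add_one_eq_two.le).differentiableAt one_ne_zero
  rw [fderiv_clm_apply hd (differentiableAt_const a), fderiv_clm_apply hd (differentiableAt_const c)]
  simpa using hf.isSymmSndFDerivAt (by simp) c a

end SecondDerivative

section MatrixCalculus

variable {𝕜 : Type*} [NontriviallyNormedField 𝕜] {E : Type*} [NormedAddCommGroup E]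
  [NormedSpace 𝕜 E] {ι : Type*} [Fintype ι] {f g : E → Matrix ι ι 𝕜} {x : E}

variable (𝕜 ι) in
/-- The sup norm on matrices is not submultiplicative, so `ContinuousLinearMap.mul` does not
apply. -/
noncomputable def matrixMulCLM [CompleteSpace 𝕜] :
    Matrix ι ι 𝕜 →L[𝕜] Matrix ι ι 𝕜 →L[𝕜] Matrix ι ι 𝕜 :=
  LinearMap.toContinuousLinearMap
    (LinearMap.toContinuousLinearMap.toLinearMap ∘ₗ LinearMap.mul 𝕜 (Matrix ι ι 𝕜))

theorem DifferentiableAt.matrix_mul [CompleteSpace 𝕜] (hf : DifferentiableAt 𝕜 f x)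
    (hg : DifferentiableAt 𝕜 g x) : DifferentiableAt 𝕜 (fun y => f y * g y) x :=
  ((matrixMulCLM 𝕜 ι).hasFDerivAt_of_bilinear hf.hasFDerivAt hg.hasFDerivAt).differentiableAt

theorem fderiv_matrix_mul [CompleteSpace 𝕜] (hf : DifferentiableAt 𝕜 f x)
    (hg : DifferentiableAt 𝕜 g x) (v : E) :
    fderiv 𝕜 (fun y => f y * g y) x v = fderiv 𝕜 f x v * g x + f x * fderiv 𝕜 g x v := by
  have h := (matrixMulCLM 𝕜 ι).hasFDerivAt_of_bilinear hf.hasFDerivAt hg.hasFDerivAt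
  exact (DFunLike.congr_fun h.fderiv v).trans (add_comm _ _)

theorem DifferentiableAt.matrix_trace (hf : DifferentiableAt 𝕜 f x) :
    DifferentiableAt 𝕜 (fun y => (f y).trace) x := by
  have h : ∀ i, DifferentiableAt 𝕜 (fun y => f y i i) x := fun i =>
    differentiableAt_pi.1 (differentiableAt_pi.1 hf i) i
  simp only [Matrix.trace, Matrix.diag]
  fun_prop

theorem fderiv_matrix_trace [CompleteSpace 𝕜] (hf : DifferentiableAt 𝕜 f x) (v : E) :
    fderiv 𝕜 (fun y => (f y).trace) x v = (fderiv 𝕜 f x v).trace := by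
  have h := (Matrix.traceLinearMap ι 𝕜 𝕜).toContinuousLinearMap.hasFDerivAt.comp x hf.hasFDerivAt
  exact DFunLike.congr_fun h.fderiv v

variable [DecidableEq ι]

theorem DifferentiableAt.matrix_det (hf : DifferentiableAt 𝕜 f x) :
    DifferentiableAt 𝕜 (fun y => (f y).det) x := by
  have h : ∀ i j, DifferentiableAt 𝕜 (fun y => f y i j) x := fun i j =>
    differentiableAt_pi.1 (differentiableAt_pi.1 hf i) j
  simp only [Matrix.det_apply]
  fun_prop

theorem DifferentiableAt.matrix_adjugate (hf : DifferentiableAt 𝕜 f x) :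
    DifferentiableAt 𝕜 (fun y => (f y).adjugate) x := by
  refine differentiableAt_pi.2 fun i => differentiableAt_pi.2 fun j => ?_
  simp only [Matrix.adjugate_apply]
  refine DifferentiableAt.matrix_det (differentiableAt_pi.2 fun k => ?_)
  by_cases hk : k = j
  · subst hk
    simp
  · simpa [hk] using differentiableAt_pi.1 hf k

theorem DifferentiableAt.matrix_inv (hf : DifferentiableAt 𝕜 f x) (hx : IsUnit (f x)) :
    DifferentiableAt 𝕜 (fun y => (f y)⁻¹) x := by
  simp only [Matrix.inv_def, Ring.inverse_eq_inv']
  exact (hf.matrix_det.inv ((Matrix.isUnit_iff_isUnit_det _).1 hx).ne_zero).smul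
    hf.matrix_adjugate

theorem fderiv_matrix_inv [CompleteSpace 𝕜] (hf : DifferentiableAt 𝕜 f x) (hx : IsUnit (f x))
    (v : E) : fderiv 𝕜 (fun y => (f y)⁻¹) x v = -((f x)⁻¹ * fderiv 𝕜 f x v * (f x)⁻¹) := by
  have hdet := (Matrix.isUnit_iff_isUnit_det _).1 hx
  have h_inv_mul : (fun y => (f y)⁻¹ * f y) =ᶠ[nhds x] fun _ => 1 := by
    filter_upwards [hf.matrix_det.continuousAt.eventually_ne hdet.ne_zero] with y hy
    exact Matrix.nonsing_inv_mul _ (isUnit_iff_ne_zero.2 hy)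
  have h := fderiv_matrix_mul (hf.matrix_inv hx) hf v
  rw [h_inv_mul.fderiv_eq, fderiv_const_apply, zero_apply] at h
  calc fderiv 𝕜 (fun y => (f y)⁻¹) x v
      = fderiv 𝕜 (fun y => (f y)⁻¹) x v * f x * (f x)⁻¹ := by
        rw [Matrix.mul_nonsing_inv_cancel_right _ _ hdet]
    _ = -((f x)⁻¹ * fderiv 𝕜 f x v * (f x)⁻¹) := by
        rw [eq_neg_of_add_eq_zero_left h.symm, neg_mul]

end MatrixCalculus

section LogDeriv

variable {𝕜 : Type*} [NontriviallyNormedField 𝕜] {E : Type*} [NormedAddCommGroup E]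
  [NormedSpace 𝕜 E] {ι : Type*} [Fintype ι] [DecidableEq ι] {f g : E → Matrix ι ι 𝕜} {x : E}

noncomputable def leftLogDeriv (f : E → Matrix ι ι 𝕜) (x v : E) : Matrix ι ι 𝕜 :=
  (f x)⁻¹ * fderiv 𝕜 f x v

noncomputable def rightLogDeriv (f : E → Matrix ι ι 𝕜) (x v : E) : Matrix ι ι 𝕜 :=
  fderiv 𝕜 f x v * (f x)⁻¹

theorem leftLogDeriv_eq_conj_rightLogDeriv (hx : IsUnit (f x)) (v : E) :
    leftLogDeriv f x v = (f x)⁻¹ * rightLogDeriv f x v * f x := by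
  rw [rightLogDeriv, ← mul_assoc,
    Matrix.nonsing_inv_mul_cancel_right _ _ ((Matrix.isUnit_iff_isUnit_det _).1 hx), leftLogDeriv]

theorem leftLogDeriv_mul [CompleteSpace 𝕜] (hf : DifferentiableAt 𝕜 f x)
    (hg : DifferentiableAt 𝕜 g x) (hfx : IsUnit (f x)) (hgx : IsUnit (g x)) (v : E) :
    leftLogDeriv (fun y => f y * g y) x v
      = (g x)⁻¹ * (leftLogDeriv f x v + rightLogDeriv g x v) * g x := by
  have hfd := (Matrix.isUnit_iff_isUnit_det _).1 hfx
  have hgd := (Matrix.isUnit_iff_isUnit_det _).1 hgx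
  simp only [leftLogDeriv, rightLogDeriv, fderiv_matrix_mul hf hg, Matrix.mul_inv_rev, mul_add,
    add_mul, mul_assoc, Matrix.nonsing_inv_mul _ hgd, Matrix.nonsing_inv_mul_cancel_left _ _ hfd,
    mul_one]

theorem leftLogDeriv_inv [CompleteSpace 𝕜] (hf : DifferentiableAt 𝕜 f x) (hx : IsUnit (f x))
    (v : E) : leftLogDeriv (fun y => (f y)⁻¹) x v = -rightLogDeriv f x v := by
  have hdet := (Matrix.isUnit_iff_isUnit_det _).1 hx
  rw [leftLogDeriv, fderiv_matrix_inv hf hx, Matrix.nonsing_inv_nonsing_inv _ hdet, mul_neg,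
    ← mul_assoc, ← mul_assoc, Matrix.mul_nonsing_inv _ hdet, one_mul, rightLogDeriv]

theorem ContDiffAt.differentiableAt_leftLogDeriv [CompleteSpace 𝕜] (hf : ContDiffAt 𝕜 2 f x)
    (hx : IsUnit (f x)) (a : E) : DifferentiableAt 𝕜 (fun y => leftLogDeriv f y a) x :=
  ((hf.differentiableAt two_ne_zero).matrix_inv hx).matrix_mul (differentiableAt_fderiv_apply hf a)

theorem ContDiffAt.differentiableAt_rightLogDeriv [CompleteSpace 𝕜] (hf : ContDiffAt 𝕜 2 f x)
    (hx : IsUnit (f x)) (b : E) : DifferentiableAt 𝕜 (fun y => rightLogDeriv f y b) x :=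
  (differentiableAt_fderiv_apply hf b).matrix_mul ((hf.differentiableAt two_ne_zero).matrix_inv hx)

theorem fderiv_leftLogDeriv [CompleteSpace 𝕜] (hf : ContDiffAt 𝕜 2 f x) (hx : IsUnit (f x))
    (a c : E) :
    fderiv 𝕜 (fun y => leftLogDeriv f y a) x c
      = (f x)⁻¹ * fderiv 𝕜 (fun y => fderiv 𝕜 f y a) x c
        - leftLogDeriv f x c * leftLogDeriv f x a := by
  have hf1 := hf.differentiableAt two_ne_zero
  refine (fderiv_matrix_mul (g := fun y => fderiv 𝕜 f y a) (hf1.matrix_inv hx)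
    (differentiableAt_fderiv_apply hf a) c).trans ?_
  rw [fderiv_matrix_inv hf1 hx, leftLogDeriv, leftLogDeriv]
  noncomm_ring

theorem fderiv_rightLogDeriv [CompleteSpace 𝕜] (hf : ContDiffAt 𝕜 2 f x) (hx : IsUnit (f x))
    (b c : E) :
    fderiv 𝕜 (fun y => rightLogDeriv f y b) x c
      = fderiv 𝕜 (fun y => fderiv 𝕜 f y b) x c * (f x)⁻¹
        - rightLogDeriv f x b * rightLogDeriv f x c := by
  have hf1 := hf.differentiableAt two_ne_zero
  refine (fderiv_matrix_mul (f := fun y => fderiv 𝕜 f y b) (differentiableAt_fderiv_apply hf b)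
    (hf1.matrix_inv hx) c).trans ?_
  rw [fderiv_matrix_inv hf1 hx, rightLogDeriv, rightLogDeriv]
  noncomm_ring

theorem fderiv_trace_leftLogDeriv_mul_rightLogDeriv [CompleteSpace 𝕜] (hf : ContDiffAt 𝕜 2 f x)
    (hg : ContDiffAt 𝕜 2 g x) (hfx : IsUnit (f x)) (hgx : IsUnit (g x)) (a b c : E) :
    fderiv 𝕜 (fun y => (leftLogDeriv f y a * rightLogDeriv g y b).trace) x c
      = (((f x)⁻¹ * fderiv 𝕜 (fun y => fderiv 𝕜 f y a) x c
            - leftLogDeriv f x c * leftLogDeriv f x a) * rightLogDeriv g x b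
          + leftLogDeriv f x a * (fderiv 𝕜 (fun y => fderiv 𝕜 g y b) x c * (g x)⁻¹
            - rightLogDeriv g x b * rightLogDeriv g x c)).trace := by
  have hα := hf.differentiableAt_leftLogDeriv hfx a
  have hβ := hg.differentiableAt_rightLogDeriv hgx b
  rw [fderiv_matrix_trace (hα.matrix_mul hβ), fderiv_matrix_mul hα hβ, fderiv_leftLogDeriv hf hfx,
    fderiv_rightLogDeriv hg hgx]

end LogDeriv

section TraceAlgebra

variable {ι R : Type*} [Fintype ι] [CommRing R]

theorem sum_perm_fin_three (φ : Fin 3 → Fin 3 → Fin 3 → R) :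
    ∑ σ : Equiv.Perm (Fin 3), ((Equiv.Perm.sign σ : ℤ) : R) * φ (σ 0) (σ 1) (σ 2)
      = φ 0 1 2 - φ 0 2 1 - φ 1 0 2 + φ 1 2 0 + φ 2 0 1 - φ 2 1 0 := by
  simp [Finset.univ_perm_fin_succ, ← Finset.univ_product_univ, Finset.sum_product,
    Fin.sum_univ_succ, Equiv.Perm.decomposeFin.symm_sign, Equiv.Perm.decomposeFin_symm_apply_zero,
    Equiv.swap_apply_of_ne_of_ne]
  simp only [show (2 : Fin 3) = (1 : Fin 2).succ from rfl, Equiv.Perm.decomposeFin_symm_apply_succ]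
  simp [Equiv.swap_apply_of_ne_of_ne]
  ring

theorem trace_mul_lie_conj [DecidableEq ι] {P : Matrix ι ι R} (hP : IsUnit P)
    (A B C : Matrix ι ι R) :
    (P⁻¹ * A * P * ⁅P⁻¹ * B * P, P⁻¹ * C * P⁆).trace = (A * ⁅B, C⁆).trace := by
  have hd := (Matrix.isUnit_iff_isUnit_det _).1 hP
  have hconj : P⁻¹ * A * P * ⁅P⁻¹ * B * P, P⁻¹ * C * P⁆ = P⁻¹ * (A * ⁅B, C⁆) * P := by
    simp only [Ring.lie_def, mul_sub, sub_mul, mul_assoc, Matrix.mul_nonsing_inv_cancel_left _ _ hd]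
  rw [hconj, Matrix.trace_mul_cycle, Matrix.mul_nonsing_inv _ hd, one_mul]

theorem alternatingSum_trace_eq_of_maurerCartan {κ : Type*} (α β : κ → Matrix ι ι R)
    (F G : κ → κ → Matrix ι ι R) (hF : ∀ i j, F i j = F j i) (hG : ∀ i j, G i j = G j i)
    (D : κ → κ → κ → R)
    (hD : ∀ c a b, D c a b = ((F c a - α c * α a) * β b + α a * (G c b - β b * β c)).trace)
    (u v w : κ) :
    (D u v w - D u w v) - (D v u w - D v w u) + (D w u v - D w v u)
      = (α u * ⁅α v, α w⁆).trace + (β u * ⁅β v, β w⁆).trace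
        - ((α u + β u) * ⁅α v + β v, α w + β w⁆).trace := by
  simp only [hD, Ring.lie_def, mul_add, add_mul, mul_sub, sub_mul, ← mul_assoc, Matrix.trace_add,
    Matrix.trace_sub]
  -- rotate every mixed monomial so that it starts with an `α` and ends with a `β`
  rw [hF v u, hF w u, hF w v, hG v u, hG w u, hG w v,
    Matrix.trace_mul_cycle (α u) (β v) (α w), ← Matrix.trace_mul_cycle (α v) (α w) (β u),
    ← Matrix.trace_mul_cycle (α v) (β w) (β u), Matrix.trace_mul_cycle (β u) (β v) (α w),
    Matrix.trace_mul_cycle (α u) (β w) (α v), ← Matrix.trace_mul_cycle (α w) (α v) (β u),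
    ← Matrix.trace_mul_cycle (α w) (β v) (β u), Matrix.trace_mul_cycle (β u) (β w) (α v)]
  ring

end TraceAlgebra

section GLForms

variable {E : Type*} [NormedAddCommGroup E] [NormedSpace ℂ E] {n : ℕ}
  {f g : E → Matrix (Fin n) (Fin n) ℂ} {x : E}

theorem threeForm_eq_trace_mul_lie (u v w : E) :
    threeForm f x u v w
      = 3 * (leftLogDeriv f x u * ⁅leftLogDeriv f x v, leftLogDeriv f x w⁆).trace := by
  set θ := fun i : Fin 3 => leftLogDeriv f x (![u, v, w] i)
  refine (sum_perm_fin_three fun i j k => (θ i * θ j * θ k).trace).trans ?_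
  simp only [θ, Matrix.cons_val_zero, Matrix.cons_val_one, Matrix.cons_val_two, Matrix.head_cons,
    Matrix.tail_cons]
  set α := leftLogDeriv f x
  rw [Matrix.trace_mul_cycle (α v) (α w) (α u), ← Matrix.trace_mul_cycle (α u) (α v) (α w),
    ← Matrix.trace_mul_cycle (α u) (α w) (α v), Matrix.trace_mul_cycle (α w) (α v) (α u),
    Ring.lie_def, mul_sub, Matrix.trace_sub, ← mul_assoc, ← mul_assoc]
  ring

theorem threeForm_inv (hf : DifferentiableAt ℂ f x) (hx : IsUnit (f x)) (u v w : E) :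
    threeForm (fun y => (f y)⁻¹) x u v w = -threeForm f x u v w := by
  rw [threeForm_eq_trace_mul_lie, threeForm_eq_trace_mul_lie, leftLogDeriv_inv hf hx,
    leftLogDeriv_inv hf hx, leftLogDeriv_inv hf hx, leftLogDeriv_eq_conj_rightLogDeriv hx u,
    leftLogDeriv_eq_conj_rightLogDeriv hx v, leftLogDeriv_eq_conj_rightLogDeriv hx w,
    trace_mul_lie_conj hx]
  simp only [Ring.lie_def, neg_mul, mul_neg, neg_neg, Matrix.trace_neg]

theorem threeForm_mul (hf : DifferentiableAt ℂ f x) (hg : DifferentiableAt ℂ g x)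
    (hfx : IsUnit (f x)) (hgx : IsUnit (g x)) (u v w : E) :
    threeForm (fun y => f y * g y) x u v w
      = 3 * ((leftLogDeriv f x u + rightLogDeriv g x u)
          * ⁅leftLogDeriv f x v + rightLogDeriv g x v,
            leftLogDeriv f x w + rightLogDeriv g x w⁆).trace := by
  rw [threeForm_eq_trace_mul_lie, leftLogDeriv_mul hf hg hfx hgx, leftLogDeriv_mul hf hg hfx hgx,
    leftLogDeriv_mul hf hg hfx hgx, trace_mul_lie_conj hgx]

theorem pairForm_eq (y v w : E) :
    pairForm f g y v w = (leftLogDeriv f y v * rightLogDeriv g y w).trace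
      - (leftLogDeriv f y w * rightLogDeriv g y v).trace := by
  simp only [pairForm, leftLogDeriv, rightLogDeriv, mul_assoc]

theorem fderiv_pairForm (hf : ContDiffAt ℂ 2 f x) (hg : ContDiffAt ℂ 2 g x) (hfx : IsUnit (f x))
    (hgx : IsUnit (g x)) (a b c : E) :
    fderiv ℂ (fun y => pairForm f g y a b) x c
      = fderiv ℂ (fun y => (leftLogDeriv f y a * rightLogDeriv g y b).trace) x c
        - fderiv ℂ (fun y => (leftLogDeriv f y b * rightLogDeriv g y a).trace) x c := by
  have hdiff : ∀ a b, DifferentiableAt ℂ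
      (fun y => (leftLogDeriv f y a * rightLogDeriv g y b).trace) x := fun a b =>
    ((hf.differentiableAt_leftLogDeriv hfx a).matrix_mul
      (hg.differentiableAt_rightLogDeriv hgx b)).matrix_trace
  simp only [pairForm_eq]
  rw [fderiv_fun_sub (hdiff a b) (hdiff b a)]
  rfl

theorem three_mul_dPairForm (hf : ContDiffAt ℂ 2 f x) (hg : ContDiffAt ℂ 2 g x)
    (hfx : IsUnit (f x)) (hgx : IsUnit (g x)) (u v w : E) :
    3 * dPairForm f g x u v w
      = threeForm f x u v w + threeForm g x u v w - threeForm (fun y => f y * g y) x u v w := by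
  have hf1 := hf.differentiableAt two_ne_zero
  have hg1 := hg.differentiableAt two_ne_zero
  have hMC := alternatingSum_trace_eq_of_maurerCartan (leftLogDeriv f x) (rightLogDeriv g x)
      (fun c a => (f x)⁻¹ * fderiv ℂ (fun y => fderiv ℂ f y a) x c)
      (fun c b => fderiv ℂ (fun y => fderiv ℂ g y b) x c * (g x)⁻¹)
      (fun i j => congrArg _ (fderiv_fderiv_apply_comm hf j i))
      (fun i j => congrArg (· * _) (fderiv_fderiv_apply_comm hg j i))
      (fun c a b => fderiv ℂ (fun y => (leftLogDeriv f y a * rightLogDeriv g y b).trace) x c)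
      (fun c a b => fderiv_trace_leftLogDeriv_mul_rightLogDeriv hf hg hfx hgx a b c) u v w
  rw [dPairForm, fderiv_pairForm hf hg hfx hgx, fderiv_pairForm hf hg hfx hgx,
    fderiv_pairForm hf hg hfx hgx, hMC,
    threeForm_mul hf1 hg1 hfx hgx, threeForm_eq_trace_mul_lie (f := f),
    threeForm_eq_trace_mul_lie (f := g), leftLogDeriv_eq_conj_rightLogDeriv hgx u,
    leftLogDeriv_eq_conj_rightLogDeriv hgx v, leftLogDeriv_eq_conj_rightLogDeriv hgx w,
    trace_mul_lie_conj hgx]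
  ring

end GLForms

/-- `3 d(f|g) = {f} + {g} - {fg}` and `{f⁻¹} = -{f}`. -/
theorem stmt_6 {E : Type*} [NormedAddCommGroup E] [NormedSpace ℂ E] {n : ℕ}
    (f g : E → Matrix (Fin n) (Fin n) ℂ)
    (hf : ContDiff ℂ ⊤ f) (hg : ContDiff ℂ ⊤ g)
    (hfu : ∀ x, IsUnit (f x)) (hgu : ∀ x, IsUnit (g x)) :
    (∀ x u v w : E,
      3 * dPairForm f g x u v w
        = threeForm f x u v w + threeForm g x u v w
            - threeForm (fun y => f y * g y) x u v w) ∧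
    (∀ x u v w : E,
      threeForm (fun y => (f y)⁻¹) x u v w = - threeForm f x u v w) := by
  have hf2 : ∀ x, ContDiffAt ℂ 2 f x := fun x => hf.contDiffAt.of_le le_top
  have hg2 : ∀ x, ContDiffAt ℂ 2 g x := fun x => hg.contDiffAt.of_le le_top
  exact ⟨fun x => three_mul_dPairForm (hf2 x) (hg2 x) (hfu x) (hgu x),
    fun x => threeForm_inv ((hf2 x).differentiableAt two_ne_zero) (hfu x)⟩
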